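/- Under the hypotheses of the partitioned CSSP setting, with ζ = max_i (1 + ‖C_i†‖₂ ‖V_i‖₂) and 𝒢 = Σ_{i=1}^k ‖(I_m − Û_i Û_i^T)V_i‖_F² the partition energy, the column-ID error satisfies ‖(I_m − CC†)A‖_F ≤ ζ √𝒢. -/

import Mathlib

/-!
On a block `V = A_i` with selected columns `C_i = V_f`, put `P = C_i C_i†`, `Q = Û_i Û_iᵀ` and
`E = (I - Q) V`. Then `P` and `Q` are orthogonal projections of the same rank `d_i`, and
`(I - P) V = (I - P) E + (I - P) Q V`. The first term has norm at most `‖E‖_F`. For the second,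
equal ranks give `‖(I - P) Q‖_F = ‖(I - Q) P‖_F = ‖E_f C_i†‖_F ≤ ‖E‖_F ‖C_i†‖₂`, since
`(I - Q) C_i = E_f` is a column selection of `E`. So `‖(I - P) V‖_F ≤ (1 + ‖C_i†‖₂ ‖V‖₂) ‖E‖_F`;
the domination hypothesis transfers this to `I - C C†`, and summing squares over the blocks
gives the bound.
-/

open Matrix BigOperators

/-- The Frobenius norm of a real matrix. -/
noncomputable def frobNorm {m n : Type*} [Fintype m] [Fintype n] (M : Matrix m n ℝ) : ℝ :=
  Real.sqrt (∑ i, ∑ j, (M i j) ^ 2)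

/-- The spectral (ℓ²-operator) norm of a real matrix. -/
noncomputable def specNorm {m n : Type*} [Fintype m] [Fintype n] [DecidableEq n]
    (M : Matrix m n ℝ) : ℝ :=
  ‖LinearMap.toContinuousLinearMap (Matrix.toEuclideanLin M)‖

/-- Moore–Penrose pseudoinverse of a full-column-rank matrix: `(MᵀM)⁻¹Mᵀ`. -/
noncomputable def pinvFR {m n : Type*} [Fintype m] [Fintype n] [DecidableEq n]
    (M : Matrix m n ℝ) : Matrix n m ℝ :=
  (Mᵀ * M)⁻¹ * Mᵀ

/-- The Euclidean norm of a real vector. -/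
noncomputable def euclNorm {n : Type*} [Fintype n] (x : n → ℝ) : ℝ :=
  Real.sqrt (∑ i, (x i) ^ 2)

namespace Matrix

section Frobenius

variable {m n : Type*} [Fintype m] [Fintype n]

lemma frobNorm_nonneg (M : Matrix m n ℝ) : 0 ≤ frobNorm M := Real.sqrt_nonneg _

lemma frobNorm_sq (M : Matrix m n ℝ) : frobNorm M ^ 2 = ∑ i, ∑ j, M i j ^ 2 :=
  Real.sq_sqrt (by positivity)

open scoped Matrix.Norms.Frobenius in
lemma frobNorm_eq_norm (M : Matrix m n ℝ) : frobNorm M = ‖M‖ := by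
  simp only [frobNorm, frobenius_norm_def, Real.sqrt_eq_rpow, Real.norm_eq_abs, Real.rpow_two,
    sq_abs]

open scoped Matrix.Norms.Frobenius in
lemma frobNorm_add_le (M N : Matrix m n ℝ) : frobNorm (M + N) ≤ frobNorm M + frobNorm N := by
  simpa only [frobNorm_eq_norm] using norm_add_le M N

open scoped Matrix.Norms.Frobenius in
lemma frobNorm_transpose (M : Matrix m n ℝ) : frobNorm Mᵀ = frobNorm M := by
  simpa only [frobNorm_eq_norm] using frobenius_norm_transpose M

lemma frobNorm_sq_eq_trace (M : Matrix m n ℝ) : frobNorm M ^ 2 = (Mᵀ * M).trace := by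
  rw [frobNorm_sq, Finset.sum_comm]
  simp only [trace, diag_apply, mul_apply, transpose_apply, sq]

lemma frobNorm_sq_eq_sum_norm_col (M : Matrix m n ℝ) :
    frobNorm M ^ 2 = ∑ j, ‖WithLp.toLp 2 (fun i => M i j)‖ ^ 2 := by
  simp only [frobNorm_sq, EuclideanSpace.norm_sq_eq, Real.norm_eq_abs, sq_abs]
  exact Finset.sum_comm

lemma frobNorm_submatrix_le {o : Type*} [Fintype o] (M : Matrix m n ℝ) {f : o → n}
    (hf : Function.Injective f) : frobNorm (M.submatrix id f) ≤ frobNorm M := by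
  refine Real.sqrt_le_sqrt (Finset.sum_le_sum fun i _ => ?_)
  calc ∑ j, M i (f j) ^ 2 = ∑ j ∈ Finset.univ.map ⟨f, hf⟩, M i j ^ 2 := by
          rw [Finset.sum_map]; rfl
    _ ≤ ∑ j, M i j ^ 2 :=
        Finset.sum_le_sum_of_subset_of_nonneg (Finset.subset_univ _) fun _ _ _ => sq_nonneg _

lemma frobNorm_sq_eq_sum_sigma {ι : Type*} [Fintype ι] {n : ι → Type*} [∀ i, Fintype (n i)]
    (M : Matrix m (Σ i, n i) ℝ) :
    frobNorm M ^ 2 = ∑ i, frobNorm (M.submatrix id (Sigma.mk i)) ^ 2 := by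
  simp only [frobNorm_sq, ← Finset.univ_sigma_univ, Finset.sum_sigma, submatrix_apply, id]
  exact Finset.sum_comm

end Frobenius

section Spectral

variable {m n p : Type*} [Fintype m] [Fintype n] [Fintype p] [DecidableEq n]

lemma specNorm_nonneg (M : Matrix m n ℝ) : 0 ≤ specNorm M := norm_nonneg _

open scoped Matrix.Norms.L2Operator in
lemma specNorm_transpose [DecidableEq m] (M : Matrix m n ℝ) : specNorm Mᵀ = specNorm M :=
  l2_opNorm_conjTranspose M

open scoped Matrix.Norms.L2Operator in
lemma norm_mulVec_le_specNorm (M : Matrix m n ℝ) (x : n → ℝ) :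
    ‖WithLp.toLp 2 (M *ᵥ x)‖ ≤ specNorm M * ‖WithLp.toLp 2 x‖ :=
  l2_opNorm_mulVec M (WithLp.toLp 2 x)

lemma frobNorm_mul_le_specNorm_mul (A : Matrix m n ℝ) (B : Matrix n p ℝ) :
    frobNorm (A * B) ≤ specNorm A * frobNorm B := by
  rw [← sq_le_sq₀ (frobNorm_nonneg _) (mul_nonneg (specNorm_nonneg A) (frobNorm_nonneg B)),
    mul_pow, frobNorm_sq_eq_sum_norm_col, frobNorm_sq_eq_sum_norm_col, Finset.mul_sum]
  refine Finset.sum_le_sum fun j _ => ?_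
  rw [← mul_pow]
  exact pow_le_pow_left₀ (norm_nonneg _) (norm_mulVec_le_specNorm A fun k => B k j) 2

lemma frobNorm_mul_le_frobNorm_mul_specNorm [DecidableEq p] (A : Matrix m n ℝ)
    (B : Matrix n p ℝ) : frobNorm (A * B) ≤ frobNorm A * specNorm B := by
  rw [← frobNorm_transpose, transpose_mul, mul_comm, ← frobNorm_transpose A, ← specNorm_transpose B]
  exact frobNorm_mul_le_specNorm_mul Bᵀ Aᵀ

end Spectral

lemma isStarProjection_iff_transpose {m α : Type*} [Fintype m] [AddCommMonoid α] [Mul α] [Star α]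
    [TrivialStar α] {P : Matrix m m α} : IsStarProjection P ↔ IsIdempotentElem P ∧ Pᵀ = P := by
  rw [isStarProjection_iff, IsSelfAdjoint, star_eq_conjTranspose,
    conjTranspose_eq_transpose_of_trivial]

lemma _root_.IsStarProjection.transpose_eq {m α : Type*} [Fintype m] [AddCommMonoid α] [Mul α]
    [Star α] [TrivialStar α] {P : Matrix m m α} (hP : IsStarProjection P) : Pᵀ = P :=
  (isStarProjection_iff_transpose.1 hP).2

section Projection

variable {m n : Type*} [Fintype m] [Fintype n] {P Q : Matrix m m ℝ}

lemma frobNorm_mul_sq_of_isStarProjection (hQ : IsStarProjection Q) (X : Matrix m n ℝ) :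
    frobNorm (Q * X) ^ 2 = (Xᵀ * Q * X).trace := by
  rw [frobNorm_sq_eq_trace, transpose_mul, hQ.transpose_eq, Matrix.mul_assoc, ← Matrix.mul_assoc Q,
    hQ.isIdempotentElem.eq, Matrix.mul_assoc]

variable [DecidableEq m]

lemma frobNorm_one_sub_mul_sq_add_frobNorm_mul_sq (hP : IsStarProjection P) (X : Matrix m n ℝ) :
    frobNorm ((1 - P) * X) ^ 2 + frobNorm (P * X) ^ 2 = frobNorm X ^ 2 := by
  rw [frobNorm_mul_sq_of_isStarProjection hP.one_sub, frobNorm_mul_sq_of_isStarProjection hP,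
    frobNorm_sq_eq_trace, ← trace_add, ← Matrix.add_mul, ← Matrix.mul_add, sub_add_cancel,
    Matrix.mul_one]

lemma frobNorm_one_sub_mul_le (hP : IsStarProjection P) (X : Matrix m n ℝ) :
    frobNorm ((1 - P) * X) ≤ frobNorm X := by
  rw [← sq_le_sq₀ (frobNorm_nonneg _) (frobNorm_nonneg _),
    ← frobNorm_one_sub_mul_sq_add_frobNorm_mul_sq hP X]
  exact le_add_of_nonneg_right (sq_nonneg _)

lemma frobNorm_one_sub_mul_sq_eq (hP : IsStarProjection P) (hQ : IsStarProjection Q) :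
    frobNorm ((1 - P) * Q) ^ 2 = Q.trace - (Q * P).trace := by
  rw [frobNorm_mul_sq_of_isStarProjection hP.one_sub, hQ.transpose_eq, trace_mul_cycle,
    hQ.isIdempotentElem.eq, mul_sub, mul_one, trace_sub]

lemma frobNorm_one_sub_mul_comm (hP : IsStarProjection P) (hQ : IsStarProjection Q)
    (htr : P.trace = Q.trace) : frobNorm ((1 - P) * Q) = frobNorm ((1 - Q) * P) := by
  rw [← sq_eq_sq₀ (frobNorm_nonneg _) (frobNorm_nonneg _), frobNorm_one_sub_mul_sq_eq hP hQ,
    frobNorm_one_sub_mul_sq_eq hQ hP, htr, trace_mul_comm]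

end Projection

section Pseudoinverse

variable {m d : Type*} [Fintype m] [Fintype d] [DecidableEq d]

lemma isIdempotentElem_mul_of_mul_eq_one {A : Matrix d m ℝ} {B : Matrix m d ℝ} (h : A * B = 1) :
    IsIdempotentElem (B * A) := by
  rw [IsIdempotentElem, Matrix.mul_assoc, ← Matrix.mul_assoc A, h, Matrix.one_mul]

lemma trace_mul_of_mul_eq_one {A : Matrix d m ℝ} {B : Matrix m d ℝ} (h : A * B = 1) :
    (B * A).trace = Fintype.card d := by
  rw [trace_mul_comm, h, trace_one]

lemma isUnit_det_transpose_mul_self {C : Matrix m d ℝ} (hC : C.rank = Fintype.card d) :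
    IsUnit (Cᵀ * C).det := by
  have hrange : LinearMap.range (Cᵀ * C).mulVecLin = ⊤ := by
    apply Submodule.eq_top_of_finrank_eq
    rw [← rank, rank_transpose_mul_self, hC, Module.finrank_fintype_fun_eq_card]
  rw [← isUnit_iff_isUnit_det, ← mulVec_surjective_iff_isUnit]
  exact LinearMap.range_eq_top.1 hrange

lemma pinvFR_mul_self {C : Matrix m d ℝ} (hC : C.rank = Fintype.card d) : pinvFR C * C = 1 := by
  rw [pinvFR, Matrix.mul_assoc, nonsing_inv_mul _ (isUnit_det_transpose_mul_self hC)]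

lemma transpose_mul_pinvFR (C : Matrix m d ℝ) : (C * pinvFR C)ᵀ = C * pinvFR C := by
  rw [pinvFR, transpose_mul, transpose_mul, transpose_nonsing_inv, transpose_mul,
    transpose_transpose, Matrix.mul_assoc]

lemma isStarProjection_mul_pinvFR {C : Matrix m d ℝ} (hC : C.rank = Fintype.card d) :
    IsStarProjection (C * pinvFR C) :=
  isStarProjection_iff_transpose.2
    ⟨isIdempotentElem_mul_of_mul_eq_one (pinvFR_mul_self hC), transpose_mul_pinvFR C⟩

lemma isStarProjection_mul_transpose {U : Matrix m d ℝ} (hU : Uᵀ * U = 1) :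
    IsStarProjection (U * Uᵀ) :=
  isStarProjection_iff_transpose.2
    ⟨isIdempotentElem_mul_of_mul_eq_one hU, by rw [transpose_mul, transpose_transpose]⟩

end Pseudoinverse

lemma mul_submatrix_id {l m n d α : Type*} [Fintype m] [Mul α] [AddCommMonoid α]
    (B : Matrix l m α) (V : Matrix m n α) (f : d → n) :
    (B * V).submatrix id f = B * V.submatrix id f := by
  rw [submatrix_mul _ _ _ _ _ Function.bijective_id, submatrix_id_id]

section Block

variable {m n d : Type*} [Fintype m] [Fintype n] [Fintype d]
  [DecidableEq m] [DecidableEq n] [DecidableEq d]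

lemma frobNorm_one_sub_mul_pinvFR_mul_le {V : Matrix m n ℝ} {C : Matrix m d ℝ} {f : d → n}
    (hf : Function.Injective f) (hCV : C = V.submatrix id f) (hC : C.rank = Fintype.card d)
    {U : Matrix m d ℝ} (hU : Uᵀ * U = 1) :
    frobNorm ((1 - C * pinvFR C) * V) ≤
      (1 + specNorm (pinvFR C) * specNorm V) * frobNorm ((1 - U * Uᵀ) * V) := by
  set P := C * pinvFR C
  set Q := U * Uᵀ
  set E := (1 - Q) * V with hE
  have hP : IsStarProjection P := isStarProjection_mul_pinvFR hC
  have hQ : IsStarProjection Q := isStarProjection_mul_transpose hU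
  have htr : P.trace = Q.trace := by
    rw [trace_mul_of_mul_eq_one (pinvFR_mul_self hC), trace_mul_of_mul_eq_one hU]
  have hEC : (1 - Q) * P = E.submatrix id f * pinvFR C := by
    rw [mul_submatrix_id, ← hCV, Matrix.mul_assoc]
  calc frobNorm ((1 - P) * V) = frobNorm ((1 - P) * E + (1 - P) * Q * V) := by
        rw [hE, Matrix.mul_assoc, ← Matrix.mul_add, ← Matrix.add_mul, sub_add_cancel, Matrix.one_mul]
    _ ≤ frobNorm E + frobNorm ((1 - P) * Q) * specNorm V :=
        (frobNorm_add_le _ _).trans <| add_le_add (frobNorm_one_sub_mul_le hP E)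
          (frobNorm_mul_le_frobNorm_mul_specNorm _ _)
    _ = frobNorm E + frobNorm (E.submatrix id f * pinvFR C) * specNorm V := by
        rw [frobNorm_one_sub_mul_comm hP hQ htr, hEC]
    _ ≤ frobNorm E + frobNorm E * specNorm (pinvFR C) * specNorm V := by
        gcongr
        · exact specNorm_nonneg V
        · exact (frobNorm_mul_le_frobNorm_mul_specNorm _ _).trans <|
            mul_le_mul_of_nonneg_right (frobNorm_submatrix_le E hf) (specNorm_nonneg _)
    _ = (1 + specNorm (pinvFR C) * specNorm V) * frobNorm E := by ring

end Block

lemma frobNorm_le_mul_sqrt_sum_sq_of_blocks {m ι : Type*} [Fintype m] [Fintype ι] {n : ι → Type*}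
    [∀ i, Fintype (n i)] (M : Matrix m (Σ i, n i) ℝ) {c : ℝ} (hc : 0 ≤ c) {g : ι → ℝ}
    (h : ∀ i, frobNorm (M.submatrix id (Sigma.mk i)) ≤ c * g i) :
    frobNorm M ≤ c * √(∑ i, g i ^ 2) := by
  rw [← sq_le_sq₀ (frobNorm_nonneg M) (by positivity), mul_pow, Real.sq_sqrt (by positivity),
    frobNorm_sq_eq_sum_sigma, Finset.mul_sum]
  refine Finset.sum_le_sum fun i _ => ?_
  rw [← mul_pow]
  exact pow_le_pow_left₀ (frobNorm_nonneg _) (h i) 2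

end Matrix

theorem partitioned_cssp_zeta_bound_general {m k : ℕ} (hk : 0 < k) (nn d : Fin k → ℕ)
    (A : Matrix (Fin m) ((i : Fin k) × Fin (nn i)) ℝ)
    (C : Matrix (Fin m) ((i : Fin k) × Fin (d i)) ℝ)
    (hsel : ∀ i, ∃ f : Fin (d i) → Fin (nn i), Function.Injective f ∧
      C.submatrix id (Sigma.mk i) = (A.submatrix id (Sigma.mk i)).submatrix id f)
    (hrankCi : ∀ i, (C.submatrix id (Sigma.mk i)).rank = d i)
    (Uh : (i : Fin k) → Matrix (Fin m) (Fin (d i)) ℝ)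
    (hUh : ∀ i, (Uh i)ᵀ * Uh i = 1)
    (hdom : ∀ i, frobNorm ((1 - C * pinvFR C) * A.submatrix id (Sigma.mk i)) ≤
      frobNorm ((1 - C.submatrix id (Sigma.mk i) * pinvFR (C.submatrix id (Sigma.mk i))) *
        A.submatrix id (Sigma.mk i)))
    (ζ : ℝ) (hζ : ζ = Finset.univ.sup' (Finset.univ_nonempty_iff.mpr ⟨⟨0, hk⟩⟩)
      (fun i => 1 + specNorm (pinvFR (C.submatrix id (Sigma.mk i))) *
        specNorm (A.submatrix id (Sigma.mk i))))
    (G : ℝ) (hG : G = ∑ i, frobNorm ((1 - Uh i * (Uh i)ᵀ) * A.submatrix id (Sigma.mk i)) ^ 2) :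
    frobNorm ((1 - C * pinvFR C) * A) ≤ ζ * Real.sqrt G := by
  subst hζ hG
  have hζ_le (i : Fin k) := Finset.le_sup' (fun i => 1 +
    specNorm (pinvFR (C.submatrix id (Sigma.mk i))) * specNorm (A.submatrix id (Sigma.mk i)))
    (Finset.mem_univ i)
  refine frobNorm_le_mul_sqrt_sum_sq_of_blocks _ ?_ fun i => ?_
  · exact (add_nonneg zero_le_one (mul_nonneg (specNorm_nonneg _) (specNorm_nonneg _))).trans
      (hζ_le ⟨0, hk⟩)
  obtain ⟨f, hf, hCi⟩ := hsel i
  rw [mul_submatrix_id]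
  have hrank : (C.submatrix id (Sigma.mk i)).rank = Fintype.card (Fin (d i)) := by
    rw [hrankCi, Fintype.card_fin]
  calc _ ≤ _ := hdom i
    _ ≤ _ := frobNorm_one_sub_mul_pinvFR_mul_le hf hCi hrank (hUh i)
    _ ≤ _ := mul_le_mul_of_nonneg_right (hζ_le i) (frobNorm_nonneg _)

/-- with `ζ = maxᵢ (1 + ‖Cᵢ†‖₂‖Vᵢ‖₂)` and `𝒢 = Σᵢ ‖(I - ÛᵢÛᵢᵀ)Vᵢ‖_F²` the
partition energy, the column-ID error satisfies `‖(I - CC†)A‖_F ≤ ζ √𝒢`. -/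
theorem partitioned_cssp_zeta_bound {m k : ℕ} (hk : 0 < k) (nn d : Fin k → ℕ)
    (A : Matrix (Fin m) ((i : Fin k) × Fin (nn i)) ℝ)
    (C : Matrix (Fin m) ((i : Fin k) × Fin (d i)) ℝ)
    (hrankC : C.rank = Fintype.card ((i : Fin k) × Fin (d i)))
    (hsel : ∀ i, ∃ f : Fin (d i) → Fin (nn i), Function.Injective f ∧
      C.submatrix id (Sigma.mk i) = (A.submatrix id (Sigma.mk i)).submatrix id f)
    (hrankCi : ∀ i, (C.submatrix id (Sigma.mk i)).rank = d i)
    (Uh : (i : Fin k) → Matrix (Fin m) (Fin (d i)) ℝ)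
    (hUh : ∀ i, (Uh i)ᵀ * Uh i = 1)
    (hEY : ∀ i, ∀ P : Matrix (Fin m) (Fin (d i)) ℝ, Pᵀ * P = 1 →
      frobNorm ((1 - Uh i * (Uh i)ᵀ) * A.submatrix id (Sigma.mk i)) ≤
        frobNorm ((1 - P * Pᵀ) * A.submatrix id (Sigma.mk i)))
    (hdom : ∀ i, frobNorm ((1 - C * pinvFR C) * A.submatrix id (Sigma.mk i)) ≤
      frobNorm ((1 - C.submatrix id (Sigma.mk i) * pinvFR (C.submatrix id (Sigma.mk i))) *
        A.submatrix id (Sigma.mk i)))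
    (ζ : ℝ) (hζ : ζ = Finset.univ.sup' (Finset.univ_nonempty_iff.mpr ⟨⟨0, hk⟩⟩)
      (fun i => 1 + specNorm (pinvFR (C.submatrix id (Sigma.mk i))) *
        specNorm (A.submatrix id (Sigma.mk i))))
    (G : ℝ) (hG : G = ∑ i, frobNorm ((1 - Uh i * (Uh i)ᵀ) * A.submatrix id (Sigma.mk i)) ^ 2) :
    frobNorm ((1 - C * pinvFR C) * A) ≤ ζ * Real.sqrt G :=
  partitioned_cssp_zeta_bound_general hk nn d A C hsel hrankCi Uh hUh hdom ζ hζ G hG
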